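/- (Integrality gap for unbounded d-dimAP+.) For every fixed integer d ≥ 1 there is a constant c_d > 0 such that for infinitely many positive integers k the following holds. There exist: a finite set V; a set T ⊆ V with |T| = k; an injective map f₀ : T → ℤ^d; a symmetric weight function w : V × V → ℝ≥0; and a metric dist on V with dist(x,y) = ‖f₀(x) − f₀(y)‖₂ for all x,y ∈ T and satisfying the d-dimensional spreading constraints, such that ∑_{{u,v}} w(u,v)·dist(u,v) > 0 and every injective map f : V → ℤ^d with f(t) = f₀(t) for all t ∈ T satisfies ∑_{{u,v}} w(u,v)·‖f(u) − f(v)‖₂ ≥ c_d · k^{1/(2d)} · ∑_{{u,v}} w(u,v)·dist(u,v). In particular, the integrality gap of the spreading LP for unbounded d-dimAP+ is Ω(k^{1/(2d)}). -/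

import Mathlib

/-!
Take as terminals the lattice box `{0, …, 2K}^d`, each placed at its own coordinates, plus one
non-terminal joined by a unit weight to the centre of the box. In the LP solution the
non-terminal sits over the centre, lifted by `1/4` along an extra `ℓ¹`-coordinate, so the LP cost
is `1/4`; an injective layout has no free lattice point left in the box and must pay at least
`K + 1 ≥ k^(1/d) / 2`, with `k = (2K + 1)^d`.

The spreading constraints come from counting lattice points: at most `(2t + 1)^d` of them lie
within distance `< t + 1` of a given point, so a set `P` of lattice points has
`∑ p ∈ P, ‖c - p‖ ≥ ∑ t < N, (|P| - (2t + 1)^d)` for every `N`. Choosing `2N - 1` to be the largest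
odd number with `(2N - 1)^d ≤ |P|` gives `|P|^(1 + 1/d) ≤ 4 ∑ p ∈ P, ‖c - p‖ + 1`, and the extra
`+ 1` disappears when `c ∉ P`; the lift of `1/4` pays for it at the non-terminal.
-/

open scoped BigOperators

/-- Euclidean distance between two points of the integer lattice `ℤ^d`. -/
noncomputable def eDist {d : ℕ} (p q : Fin d → ℤ) : ℝ :=
  Real.sqrt (∑ i, ((p i : ℝ) - (q i : ℝ)) ^ 2)

/-- `dist` is a metric on `V`. -/
def IsMetric {V : Type*} (dist : V → V → ℝ) : Prop :=
  (∀ x, dist x x = 0) ∧ (∀ x y, 0 ≤ dist x y) ∧ (∀ x y, dist x y = dist y x) ∧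
  (∀ x y z, dist x z ≤ dist x y + dist y z) ∧ (∀ x y, dist x y = 0 → x = y)

/-- An integrality-gap instance for unbounded `d`-dimAP+ with `k` terminals and gap
parameter `c·k^(1/(2d))`: a feasible spreading-LP solution of positive cost such that
every injective layout `f : V → ℤ^d` extending `f₀` costs at least
`c · k^(1/(2d))` times the LP cost. -/
def UnboundedGapInstance (d : ℕ) (c : ℝ) (k : ℕ) (V : Type)
    [Fintype V] [DecidableEq V] : Prop :=
  ∃ (T : Finset V) (f₀ : {x // x ∈ T} → (Fin d → ℤ)) (w : V → V → ℝ)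
    (dist : V → V → ℝ),
    T.card = k ∧
    Function.Injective f₀ ∧
    (∀ u v, w u v = w v u) ∧ (∀ u v, 0 ≤ w u v) ∧ (∀ v, w v v = 0) ∧
    IsMetric dist ∧
    (∀ x y : {x // x ∈ T}, dist x.1 y.1 = eDist (f₀ x) (f₀ y)) ∧
    (∀ S : Finset V, ∀ u ∈ S,
      ((S.card : ℝ) - 1) ^ ((1 : ℝ) + 1 / (d : ℝ)) / 4 ≤ ∑ v ∈ S, dist u v) ∧
    0 < (∑ u, ∑ v, w u v * dist u v) / 2 ∧
    (∀ f : V → (Fin d → ℤ), Function.Injective f →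
      (∀ t (ht : t ∈ T), f t = f₀ ⟨t, ht⟩) →
      c * (k : ℝ) ^ ((1 : ℝ) / (2 * (d : ℝ))) * ((∑ u, ∑ v, w u v * dist u v) / 2) ≤
        (∑ u, ∑ v, w u v * eDist (f u) (f v)) / 2)

open Finset

namespace DimAP

theorem add_one_pow_add_add_one_pow_le (d a b : ℕ) :
    (a + 1) ^ d + (b + 1) ^ d ≤ (a + b + 1) ^ d + 1 := by
  induction d with
  | zero => simp
  | succ d ih =>
    have ha : (a + 1) ^ d ≤ (a + b + 1) ^ d := Nat.pow_le_pow_left (by omega) d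
    have hb : (b + 1) ^ d ≤ (a + b + 1) ^ d := Nat.pow_le_pow_left (by omega) d
    simp only [pow_succ]
    nlinarith

theorem two_mul_sum_odd_pow_le (d J : ℕ) :
    2 * ∑ t ∈ range (J + 1), (2 * t + 1) ^ d ≤ (J + 1) * ((2 * J + 1) ^ d + 1) := by
  have reflect : ∑ t ∈ range (J + 1), (2 * (J - t) + 1) ^ d =
      ∑ t ∈ range (J + 1), (2 * t + 1) ^ d := by
    rw [← sum_range_reflect]
    refine sum_congr rfl fun t ht => ?_
    rw [mem_range] at ht
    congr 3
    omega
  calc 2 * ∑ t ∈ range (J + 1), (2 * t + 1) ^ d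
      = ∑ t ∈ range (J + 1), ((2 * t + 1) ^ d + (2 * (J - t) + 1) ^ d) := by
        rw [sum_add_distrib, reflect, two_mul]
    _ ≤ ∑ _t ∈ range (J + 1), ((2 * J + 1) ^ d + 1) := by
        refine sum_le_sum fun t ht => ?_
        rw [mem_range] at ht
        have h := add_one_pow_add_add_one_pow_le d (2 * t) (2 * (J - t))
        rwa [show 2 * t + 2 * (J - t) + 1 = 2 * J + 1 by omega] at h
    _ = (J + 1) * ((2 * J + 1) ^ d + 1) := by simp

theorem exists_le_pow_and_mul_add_le {d q s : ℕ} (hd : 1 ≤ d)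
    (hlo : q ^ d ≤ s) (hhi : s < (q + 2) ^ d) :
    ∃ m, s ≤ m ^ d ∧ s * m + (q + 1) * (q ^ d + 1) ≤ 2 * (q + 1) * s + 1 := by
  have hq_le : q ≤ q ^ d := Nat.le_self_pow (by omega) q
  rcases hlo.eq_or_lt with rfl | hlo
  · exact ⟨q, le_rfl, by nlinarith⟩
  rcases le_or_gt s ((q + 1) ^ d) with hmid | hmid
  · exact ⟨q + 1, hmid, by nlinarith⟩
  refine ⟨q + 2, hhi.le, ?_⟩
  obtain ⟨e, rfl⟩ : ∃ e, d = e + 1 := ⟨d - 1, by omega⟩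
  have hstep : (q + 1) * q ^ e ≤ (q + 1) ^ (e + 1) := by
    rw [pow_succ']; exact Nat.mul_le_mul_left _ (Nat.pow_le_pow_left (by omega) e)
  have hs : q * q ^ e + q ^ e + 1 ≤ s := by linarith
  rw [pow_succ']
  nlinarith [Nat.mul_le_mul_left q hs]

theorem rpow_one_add_one_div_le_mul {d s m : ℕ} (hd : 1 ≤ d) (h : s ≤ m ^ d) :
    (s : ℝ) ^ ((1 : ℝ) + 1 / (d : ℝ)) ≤ s * m := by
  rcases Nat.eq_zero_or_pos s with rfl | hs
  · rw [Nat.cast_zero, Real.zero_rpow (by positivity), zero_mul]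
  have hs' : (0 : ℝ) < s := by exact_mod_cast hs
  rw [Real.rpow_add hs', Real.rpow_one, one_div]
  gcongr
  rw [Real.rpow_inv_le_iff_of_pos hs'.le (by positivity) (by positivity)]
  exact_mod_cast h

-- For `d = 1` and odd `s` this is an equality, so the choice of `N` below leaves no slack.
theorem exists_rpow_le_four_mul_sum_add_one {d s : ℕ} (hd : 1 ≤ d) (hs : 1 ≤ s) :
    ∃ N, (s : ℝ) ^ ((1 : ℝ) + 1 / (d : ℝ)) ≤
      4 * ∑ t ∈ range N, ((s : ℝ) - (2 * t + 1) ^ d) + 1 := by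
  set J := Nat.findGreatest (fun j => (2 * j + 1) ^ d ≤ s) s
  have hJ : (2 * J + 1) ^ d ≤ s := Nat.findGreatest_spec (P := fun j => (2 * j + 1) ^ d ≤ s)
    (Nat.zero_le s) (by simpa using hs)
  have hJ1 : s < (2 * J + 3) ^ d := by
    by_contra! h
    refine Nat.findGreatest_is_greatest (Nat.lt_succ_self J) ?_ h
    have hJ_le := Nat.le_self_pow (show d ≠ 0 by omega) (2 * J + 1)
    omega
  obtain ⟨m, hm, hineq⟩ := exists_le_pow_and_mul_add_le hd hJ hJ1
  refine ⟨J + 1, ?_⟩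
  rw [sum_sub_distrib, sum_const, card_range, nsmul_eq_mul]
  have hsum' : (2 : ℝ) * ∑ t ∈ range (J + 1), (2 * (t : ℝ) + 1) ^ d ≤
      (J + 1) * ((2 * J + 1) ^ d + 1) := by exact_mod_cast two_mul_sum_odd_pow_le d J
  have hineq' : (s : ℝ) * m + (2 * J + 1 + 1) * ((2 * J + 1) ^ d + 1) ≤
      2 * (2 * J + 1 + 1) * s + 1 := by exact_mod_cast hineq
  have := rpow_one_add_one_div_le_mul hd hm
  push_cast
  linarith

variable {d : ℕ}

def toEuclidean (p : Fin d → ℤ) : EuclideanSpace ℝ (Fin d) :=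
  WithLp.toLp 2 fun i => (p i : ℝ)

theorem toEuclidean_injective : Function.Injective (toEuclidean (d := d)) := by
  intro p q h
  funext i
  simpa [toEuclidean] using congrArg (fun x : EuclideanSpace ℝ (Fin d) => x i) h

theorem eDist_eq_dist (p q : Fin d → ℤ) : eDist p q = dist (toEuclidean p) (toEuclidean q) := by
  simp only [EuclideanSpace.dist_eq, eDist, toEuclidean, Real.dist_eq, sq_abs]

@[simp] theorem eDist_self (p : Fin d → ℤ) : eDist p p = 0 := by
  rw [eDist_eq_dist, dist_self]

theorem eDist_comm (p q : Fin d → ℤ) : eDist p q = eDist q p := by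
  rw [eDist_eq_dist, eDist_eq_dist, dist_comm]

theorem eDist_nonneg (p q : Fin d → ℤ) : 0 ≤ eDist p q := by
  rw [eDist_eq_dist]; exact dist_nonneg

theorem abs_sub_le_eDist (p q : Fin d → ℤ) (i : Fin d) : |(p i : ℝ) - q i| ≤ eDist p q := by
  rw [eDist, ← Real.sqrt_sq_eq_abs]
  exact Real.sqrt_le_sqrt <| single_le_sum (f := fun i => ((p i : ℝ) - q i) ^ 2)
    (fun _ _ => sq_nonneg _) (mem_univ i)

theorem card_filter_eDist_lt_le (P : Finset (Fin d → ℤ)) (c : Fin d → ℤ) (t : ℕ) :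
    #{p ∈ P | eDist c p < t + 1} ≤ (2 * t + 1) ^ d := by
  have hsub : {p ∈ P | eDist c p < t + 1} ⊆ Icc (c - fun _ => (t : ℤ)) (c + fun _ => (t : ℤ)) := by
    intro p hp
    rw [mem_filter] at hp
    simp only [mem_Icc, Pi.le_def, Pi.sub_apply, Pi.add_apply]
    have hi : ∀ i, |p i - c i| ≤ t := fun i => by
      have h := (abs_sub_le_eDist p c i).trans_lt (eDist_comm c p ▸ hp.2)
      have h' : ((|p i - c i| : ℤ) : ℝ) < (t : ℤ) + 1 := by push_cast; exact h
      exact Int.lt_add_one_iff.mp (by exact_mod_cast h')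
    exact ⟨fun i => by linarith [(abs_le.mp (hi i)).1], fun i => by linarith [(abs_le.mp (hi i)).2]⟩
  calc #{p ∈ P | eDist c p < t + 1} ≤ #(Icc (c - fun _ => (t : ℤ)) (c + fun _ => (t : ℤ))) :=
        card_le_card hsub
    _ = (2 * t + 1) ^ d := by
        have hside : ∀ i, #(Icc (c i - t) (c i + t)) = 2 * t + 1 := fun i => by
          rw [Int.card_Icc]; omega
        simp only [Pi.card_Icc, Pi.sub_apply, Pi.add_apply, hside, prod_const, card_univ,
          Fintype.card_fin]

theorem sum_card_filter_le_sum {α : Type*} (P : Finset α) (f : α → ℝ) (hf : ∀ p ∈ P, 0 ≤ f p)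
    (N : ℕ) : ∑ t ∈ range N, (#{p ∈ P | (t : ℝ) + 1 ≤ f p} : ℝ) ≤ ∑ p ∈ P, f p := by
  have hlevel : ∀ p ∈ P, (#{t ∈ range N | ((t : ℕ) : ℝ) + 1 ≤ f p} : ℝ) ≤ f p := fun p hp => by
    have hsub : {t ∈ range N | ((t : ℕ) : ℝ) + 1 ≤ f p} ⊆ range ⌊f p⌋₊ := fun t ht => by
      rw [mem_filter] at ht
      rw [mem_range, Nat.lt_iff_add_one_le]
      exact Nat.le_floor (by exact_mod_cast ht.2)
    calc (#{t ∈ range N | ((t : ℕ) : ℝ) + 1 ≤ f p} : ℝ) ≤ #(range ⌊f p⌋₊) := by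
          exact_mod_cast card_le_card hsub
      _ ≤ f p := by rw [card_range]; exact Nat.floor_le (hf p hp)
  simp only [natCast_card_filter] at hlevel ⊢
  rw [sum_comm]
  exact sum_le_sum hlevel

theorem sum_sub_pow_le_sum_eDist (P : Finset (Fin d → ℤ)) (c : Fin d → ℤ) (N : ℕ) :
    ∑ t ∈ range N, ((#P : ℝ) - (2 * t + 1) ^ d) ≤ ∑ p ∈ P, eDist c p := by
  refine le_trans (sum_le_sum fun t _ => ?_)
    (sum_card_filter_le_sum P (eDist c) (fun p _ => eDist_nonneg c p) N)
  have hsplit := card_filter_add_card_filter_not (s := P) (fun p => (t : ℝ) + 1 ≤ eDist c p)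
  have hnear : #{p ∈ P | ¬ (t : ℝ) + 1 ≤ eDist c p} ≤ (2 * t + 1) ^ d := by
    simpa only [not_le] using card_filter_eDist_lt_le P c t
  have : (#P : ℝ) ≤ #{p ∈ P | (t : ℝ) + 1 ≤ eDist c p} + ((2 * t + 1) ^ d : ℕ) := by
    exact_mod_cast (by omega : #P ≤ #{p ∈ P | (t : ℝ) + 1 ≤ eDist c p} + (2 * t + 1) ^ d)
  push_cast at this
  linarith

theorem card_rpow_le_four_mul_sum_eDist_add_one (hd : 1 ≤ d) {P : Finset (Fin d → ℤ)}
    (hP : P.Nonempty) (c : Fin d → ℤ) :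
    (#P : ℝ) ^ ((1 : ℝ) + 1 / (d : ℝ)) ≤ 4 * ∑ p ∈ P, eDist c p + 1 := by
  obtain ⟨N, hN⟩ := exists_rpow_le_four_mul_sum_add_one hd (card_pos.mpr hP)
  linarith [sum_sub_pow_le_sum_eDist P c N]

theorem card_rpow_le_four_mul_sum_eDist (hd : 1 ≤ d) {P : Finset (Fin d → ℤ)}
    {c : Fin d → ℤ} (hc : c ∉ P) :
    (#P : ℝ) ^ ((1 : ℝ) + 1 / (d : ℝ)) ≤ 4 * ∑ p ∈ P, eDist c p := by
  have h := card_rpow_le_four_mul_sum_eDist_add_one hd (insert_nonempty c P) c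
  rw [card_insert_of_notMem hc, sum_insert hc, eDist_self, zero_add, Nat.cast_add_one] at h
  have hsuper := Real.add_rpow_le_rpow_add (Nat.cast_nonneg (#P)) zero_le_one
    (p := (1 : ℝ) + 1 / (d : ℝ)) (by simp)
  rw [Real.one_rpow] at hsuper
  linarith

theorem isMetric_dist_comp {V X : Type*} [MetricSpace X] {φ : V → X}
    (hφ : Function.Injective φ) : IsMetric fun u v => dist (φ u) (φ v) :=
  ⟨fun _ => dist_self _, fun _ _ => dist_nonneg, fun _ _ => dist_comm _ _,
    fun _ _ _ => dist_triangle _ _ _, fun _ _ h => hφ (dist_eq_zero.mp h)⟩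

section EdgeWeight

variable {V : Type*} [DecidableEq V]

def edgeWeight (a b u v : V) : ℝ :=
  if s(u, v) = s(a, b) then 1 else 0

theorem edgeWeight_comm (a b u v : V) : edgeWeight a b u v = edgeWeight a b v u := by
  simp only [edgeWeight, Sym2.eq_swap]

theorem edgeWeight_nonneg (a b u v : V) : 0 ≤ edgeWeight a b u v := by
  unfold edgeWeight; split <;> norm_num

theorem edgeWeight_self {a b : V} (hab : a ≠ b) (v : V) : edgeWeight a b v v = 0 := by
  simp only [edgeWeight, Sym2.eq_iff]
  grind

theorem sum_sum_edgeWeight_mul [Fintype V] {a b : V} (hab : a ≠ b) (g : V → V → ℝ) :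
    ∑ u, ∑ v, edgeWeight a b u v * g u v = g a b + g b a := by
  have hsplit : ∀ u v, edgeWeight a b u v * g u v =
      (if u = a then if v = b then g u v else 0 else 0) +
        (if u = b then if v = a then g u v else 0 else 0) := fun u v => by
    by_cases hu : u = a <;> by_cases hv : u = b <;> simp_all [edgeWeight, eq_comm]
  simp [hsplit, sum_add_distrib]

end EdgeWeight

section Lift

variable {B : Type*} (ι : B ↪ (Fin d → ℤ)) (c : Fin d → ℤ)

def position (v : Option B) : Fin d → ℤ :=
  v.elim c ι

noncomputable def height (v : Option B) : ℝ :=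
  v.elim (1 / 4) fun _ => 0

noncomputable def liftedPoint (v : Option B) : WithLp 1 (EuclideanSpace ℝ (Fin d) × ℝ) :=
  WithLp.toLp 1 (toEuclidean (position ι c v), height v)

noncomputable def lpDist (u v : Option B) : ℝ :=
  dist (liftedPoint ι c u) (liftedPoint ι c v)

theorem lpDist_eq (u v : Option B) :
    lpDist ι c u v = eDist (position ι c u) (position ι c v) + |height u - height v| := by
  rw [lpDist, WithLp.prod_dist_eq_of_L1, eDist_eq_dist, Real.dist_eq]
  rfl

theorem liftedPoint_injective : Function.Injective (liftedPoint ι c) := by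
  rintro (_ | p) (_ | q) h <;> simp only [liftedPoint, WithLp.toLp.injEq, Prod.mk.injEq] at h
  · rfl
  · norm_num [height] at h
  · norm_num [height] at h
  · exact congrArg some (ι.injective (toEuclidean_injective h.1))

theorem isMetric_lpDist : IsMetric (lpDist ι c) :=
  isMetric_dist_comp (liftedPoint_injective ι c)

@[simp] theorem lpDist_some_some (p q : B) : lpDist ι c (some p) (some q) = eDist (ι p) (ι q) := by
  simp [lpDist_eq, position, height]

@[simp] theorem lpDist_none_some (q : B) : lpDist ι c none (some q) = eDist c (ι q) + 1 / 4 := by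
  norm_num [lpDist_eq, position, height]

@[simp] theorem lpDist_some_none (p : B) : lpDist ι c (some p) none = eDist (ι p) c + 1 / 4 := by
  norm_num [lpDist_eq, position, height]

@[simp] theorem lpDist_self (v : Option B) : lpDist ι c v v = 0 :=
  (isMetric_lpDist ι c).1 v

theorem lpDist_spreading (hd : 1 ≤ d) (S : Finset (Option B)) (u : Option B) (hu : u ∈ S) :
    ((#S : ℝ) - 1) ^ ((1 : ℝ) + 1 / (d : ℝ)) / 4 ≤ ∑ v ∈ S, lpDist ι c u v := by
  classical
  by_cases hn : none ∈ S
  · obtain ⟨Q, rfl⟩ : ∃ Q, S = insertNone Q :=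
      ⟨eraseNone S, by rw [insertNone_eraseNone, insert_eq_of_mem hn]⟩
    rw [card_insertNone, Nat.cast_add_one, add_sub_cancel_right, sum_insertNone]
    cases u with
    | none =>
      rcases Q.eq_empty_or_nonempty with rfl | hQ
      · rw [card_empty, Nat.cast_zero, Real.zero_rpow (by positivity)]
        simp
      have h := card_rpow_le_four_mul_sum_eDist_add_one hd (hQ.map (f := ι)) c
      rw [card_map, sum_map] at h
      have hQ1 : (1 : ℝ) ≤ #Q := by exact_mod_cast hQ.card_pos
      simp only [lpDist_self, lpDist_none_some, sum_add_distrib, sum_const, nsmul_eq_mul]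
      linarith
    | some p =>
      have hp : p ∈ Q := some_mem_insertNone.mp hu
      have h := card_rpow_le_four_mul_sum_eDist_add_one hd ⟨_, mem_map_of_mem ι hp⟩ (ι p)
      rw [card_map, sum_map] at h
      simp only [lpDist_some_none, lpDist_some_some]
      linarith [eDist_nonneg (ι p) c]
  · obtain ⟨Q, rfl⟩ : ∃ Q, S = Q.map Function.Embedding.some :=
      ⟨eraseNone S, by rw [map_some_eraseNone, erase_eq_of_notMem hn]⟩
    obtain ⟨p, hp, rfl⟩ := mem_map.mp hu
    have h := card_rpow_le_four_mul_sum_eDist hd (P := (Q.erase p).map ι) (c := ι p)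
      (by simp)
    rw [card_map, sum_map] at h
    rw [card_map, sum_map, ← add_sum_erase Q _ hp, ← card_erase_add_one hp, Nat.cast_add_one,
      add_sub_cancel_right]
    simp only [Function.Embedding.some_apply, lpDist_some_some, eDist_self, zero_add]
    linarith

end Lift

section Box

variable (d) (K : ℕ)

def boxEmbedding : (Fin d → Fin (2 * K + 1)) ↪ (Fin d → ℤ) :=
  ⟨fun p i => p i, fun _ _ h => funext fun i => Fin.ext (Nat.cast_injective (congrFun h i))⟩

def boxCenter : Fin d → Fin (2 * K + 1) :=
  fun _ => ⟨K, by omega⟩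

theorem boxEmbedding_boxCenter : boxEmbedding d K (boxCenter d K) = fun _ => (K : ℤ) :=
  rfl

variable {d K}

theorem add_one_le_eDist_of_notMem_range {x : Fin d → ℤ}
    (hx : x ∉ Set.range (boxEmbedding d K)) : (K : ℝ) + 1 ≤ eDist x fun _ => (K : ℤ) := by
  obtain ⟨i, hi⟩ : ∃ i, x i < 0 ∨ 2 * (K : ℤ) < x i := by
    by_contra! hbox
    exact hx ⟨fun i => ⟨(x i).toNat, by have := hbox i; omega⟩,
      funext fun i => Int.toNat_of_nonneg (hbox i).1⟩
  have hcoord : (K : ℤ) + 1 ≤ |x i - K| := by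
    rcases hi with hi | hi
    · rw [abs_of_neg (by omega)]; omega
    · rw [abs_of_pos (by omega)]; omega
  have hcoord' : (K : ℝ) + 1 ≤ |(x i : ℝ) - K| := by exact_mod_cast hcoord
  exact hcoord'.trans (abs_sub_le_eDist x (fun _ => (K : ℤ)) i)

theorem pow_rpow_one_div_two_mul_le (hd : 1 ≤ d) :
    (((2 * K + 1) ^ d : ℕ) : ℝ) ^ ((1 : ℝ) / (2 * (d : ℝ))) ≤ 2 * K + 1 := by
  push_cast
  calc ((2 * (K : ℝ) + 1) ^ d) ^ ((1 : ℝ) / (2 * (d : ℝ)))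
      ≤ ((2 * (K : ℝ) + 1) ^ d) ^ ((d : ℝ)⁻¹) :=
        Real.rpow_le_rpow_of_exponent_le (one_le_pow₀ (by linarith [K.cast_nonneg (α := ℝ)]))
          (by rw [one_div]; gcongr; linarith [(by exact_mod_cast hd : (1 : ℝ) ≤ d)])
    _ = 2 * K + 1 := Real.pow_rpow_inv_natCast (by positivity) (by omega)

theorem unboundedGapInstance_box (hd : 1 ≤ d) :
    UnboundedGapInstance d 1 ((2 * K + 1) ^ d) (Option (Fin d → Fin (2 * K + 1))) := by
  set ι := boxEmbedding d K
  set c : Fin d → ℤ := fun _ => K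
  set a := boxCenter d K
  have hne : (none : Option (Fin d → Fin (2 * K + 1))) ≠ some a := (Option.some_ne_none a).symm
  have hlp : (∑ u, ∑ v, edgeWeight none (some a) u v * lpDist ι c u v) / 2 = 1 / 4 := by
    rw [sum_sum_edgeWeight_mul hne, lpDist_none_some, lpDist_some_none, boxEmbedding_boxCenter,
      eDist_self]
    norm_num
  refine ⟨univ.map Function.Embedding.some, fun x => position ι c x.1, edgeWeight none (some a),
    lpDist ι c, by simp, ?_, edgeWeight_comm _ _, edgeWeight_nonneg _ _, edgeWeight_self hne,
    isMetric_lpDist ι c, ?_, lpDist_spreading ι c hd, by rw [hlp]; norm_num, ?_⟩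
  · rintro ⟨x, hx⟩ ⟨y, hy⟩ h
    obtain ⟨p, -, rfl⟩ := mem_map.mp hx
    obtain ⟨q, -, rfl⟩ := mem_map.mp hy
    simpa using ι.injective h
  · rintro ⟨x, hx⟩ ⟨y, hy⟩
    obtain ⟨p, -, rfl⟩ := mem_map.mp hx
    obtain ⟨q, -, rfl⟩ := mem_map.mp hy
    exact lpDist_some_some ι c p q
  · intro f hf hext
    have hfix : ∀ p, f (some p) = ι p := fun p => hext _ (mem_map_of_mem _ (mem_univ p))
    have hfar : (K : ℝ) + 1 ≤ eDist (f none) c := by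
      refine add_one_le_eDist_of_notMem_range fun ⟨p, hp⟩ => ?_
      exact Option.some_ne_none p (hf ((hfix p).trans hp))
    rw [hlp, sum_sum_edgeWeight_mul hne, hfix, eDist_comm (ι a), boxEmbedding_boxCenter]
    linarith [pow_rpow_one_div_two_mul_le (K := K) hd]

end Box

end DimAP

/-- Integrality gap for unbounded `d`-dimAP+: for every fixed `d ≥ 1` there is a
constant `c_d > 0` such that for infinitely many `k` there is an instance with `k`
terminals on which every integral solution costs at least `c_d·k^(1/(2d))` times the
LP cost. -/
theorem unbounded_ddimap_plus_integrality_gap (d : ℕ) (hd : 1 ≤ d) :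
    ∃ c : ℝ, 0 < c ∧
    ∀ K : ℕ, ∃ k : ℕ, K ≤ k ∧
      ∃ (V : Type) (i1 : Fintype V) (i2 : DecidableEq V),
        @UnboundedGapInstance d c k V i1 i2 :=
  ⟨1, one_pos, fun K => ⟨(2 * K + 1) ^ d,
    (by omega : K ≤ 2 * K + 1).trans (Nat.le_self_pow (by omega) _),
    _, _, _, DimAP.unboundedGapInstance_box hd⟩⟩
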